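/- arXiv:1809.03938 — 2 statements merged into one kernel-verified Lean document; each statement's English description precedes it below -/
import Mathlib

section
/- In H the following hold: the subspace P_{1,da^5}(H) = {x ∈ H : Δ(x) = x⊗1 + da^5⊗x} equals the k-span of 1 − da^5 and ca^5; the subspace P_{1,a^3}(H) = {x ∈ H : Δ(x) = x⊗1 + a^3⊗x} equals the k-span of 1 − a^3; and the subspace P_{1,da^2}(H) = {x ∈ H : Δ(x) = x⊗1 + da^2⊗x} equals the k-span of 1 − da^2. -/
/- STATEMENT 3: In H: P_{1,da^5}(H) = span{1 - d a^5, c a^5}, P_{1,a^3}(H) = span{1 - a^3},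
P_{1,da^2}(H) = span{1 - d a^2}, where P_{1,g}(H) = {x : Δ x = x ⊗ 1 + g ⊗ x}. -/

open scoped TensorProduct
namespace Paper24

variable (k : Type) [Field k] (ξ : k)

/-- The generator `a` of the free algebra on four generators. -/
noncomputable def a₀ : FreeAlgebra k (Fin 4) := FreeAlgebra.ι k 0
/-- The generator `b`. -/
noncomputable def b₀ : FreeAlgebra k (Fin 4) := FreeAlgebra.ι k 1
/-- The generator `c`. -/
noncomputable def c₀ : FreeAlgebra k (Fin 4) := FreeAlgebra.ι k 2
/-- The generator `d`. -/
noncomputable def d₀ : FreeAlgebra k (Fin 4) := FreeAlgebra.ι k 3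

/-- The defining relations of the Hopf algebra `H`; quotienting the free algebra by the
relation `r ~ r'` for each constructor is the same as quotienting by the two-sided ideal
generated by the corresponding differences. -/
inductive HRel : FreeAlgebra k (Fin 4) → FreeAlgebra k (Fin 4) → Prop
  | a6 : HRel (a₀ k ^ 6) 1
  | b2 : HRel (b₀ k ^ 2) 0
  | c2 : HRel (c₀ k ^ 2) 0
  | d6 : HRel (d₀ k ^ 6) 1
  | a2d2 : HRel (a₀ k ^ 2) (d₀ k ^ 2)
  | ad : HRel (a₀ k * d₀ k) (d₀ k * a₀ k)
  | bc : HRel (b₀ k * c₀ k) 0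
  | cb : HRel (c₀ k * b₀ k) 0
  | ab : HRel (a₀ k * b₀ k) (ξ • (b₀ k * a₀ k))
  | ac : HRel (a₀ k * c₀ k) (ξ • (c₀ k * a₀ k))
  | db : HRel (d₀ k * b₀ k) (-(ξ • (b₀ k * d₀ k)))
  | dc : HRel (d₀ k * c₀ k) (-(ξ • (c₀ k * d₀ k)))
  | bd : HRel (b₀ k * d₀ k) (c₀ k * a₀ k)
  | ba : HRel (b₀ k * a₀ k) (c₀ k * d₀ k)

/-- The algebra `H`, as a quotient of the free algebra by the defining relations. -/
noncomputable abbrev HAlg := RingQuot (HRel k ξ)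

/-- The image of `a` in `H`. -/
noncomputable def Ha : HAlg k ξ := RingQuot.mkAlgHom k (HRel k ξ) (a₀ k)
/-- The image of `b` in `H`. -/
noncomputable def Hb : HAlg k ξ := RingQuot.mkAlgHom k (HRel k ξ) (b₀ k)
/-- The image of `c` in `H`. -/
noncomputable def Hc : HAlg k ξ := RingQuot.mkAlgHom k (HRel k ξ) (c₀ k)
/-- The image of `d` in `H`. -/
noncomputable def Hd : HAlg k ξ := RingQuot.mkAlgHom k (HRel k ξ) (d₀ k)

end Paper24

open Paper24

/-!
The monomials `g a^i` with `g ∈ {1, b, c, d}` and `i ∈ ℤ/6` form a basis of `H`: they span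
because left multiplication by a generator sends a monomial to a multiple of a monomial, and they
are independent because the same multiplication table defines a representation of `H` on `k^24`
in which the monomials send `e₀` to the standard basis vectors.

Let `φ` be the coordinate of `1` in this basis. Among the monomials only `1` and `c a^5` survive
`(id ⊗ φ) ∘ Δ`, so applying it to `Δ x = x ⊗ 1 + g ⊗ x` gives `x = φ(x) (1 - g) + ψ(x) c a^5`,
with `ψ` the coordinate of `c a^5`. Since `c a^5 ∈ P_{1,da^5}` and `P_{1,g} ∩ P_{1,h} = 0` for
`g ≠ h`, the second term survives only for `g = d a^5`. Finally `a^3`, `d a^2` and `d a^5` are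
group-like because the correction terms of `Δ(a^n)` and `Δ(d a^n)` carry the factor
`∑_{i<m} ξ^(2i)`, which vanishes when `3 ∣ m` as `ξ^2` is a primitive cube root of unity.
-/

section SkewPrimitives

open TensorProduct

lemma TensorProduct.eq_zero_of_tmul_eq_zero {K V W : Type*} [Field K] [AddCommGroup V]
    [Module K V] [AddCommGroup W] [Module K W] {v : V} {w : W} (h : v ⊗ₜ[K] w = 0)
    (hw : w ≠ 0) : v = 0 := by
  let b := Module.Free.chooseBasis K W
  obtain ⟨q, hq⟩ : ∃ q, b.repr w q ≠ 0 := by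
    by_contra! h0
    exact hw (b.repr.injective (Finsupp.ext fun q => by simpa using h0 q))
  have : b.coord q w • v = 0 := by
    simpa using
      congrArg ((TensorProduct.rid K V).toLinearMap ∘ₗ LinearMap.lTensor V (b.coord q)) h
  exact (smul_eq_zero.mp this).resolve_left hq

variable {R M : Type*} [CommRing R] [AddCommGroup M] [Module R M]

def skewPrimitives (Δ : M →ₗ[R] M ⊗[R] M) (g h : M) : Submodule R M where
  carrier := {x | Δ x = x ⊗ₜ g + h ⊗ₜ x}
  add_mem' {x y} (hx : Δ x = _) (hy : Δ y = _) := by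
    change Δ (x + y) = (x + y) ⊗ₜ g + h ⊗ₜ (x + y)
    rw [map_add, hx, hy, add_tmul, tmul_add]
    abel
  zero_mem' := by simp
  smul_mem' r x (hx : Δ x = _) := by
    change Δ (r • x) = (r • x) ⊗ₜ g + h ⊗ₜ (r • x)
    rw [map_smul, hx, smul_add, smul_tmul', tmul_smul]

lemma mem_skewPrimitives {Δ : M →ₗ[R] M ⊗[R] M} {g h x : M} :
    x ∈ skewPrimitives Δ g h ↔ Δ x = x ⊗ₜ g + h ⊗ₜ x := Iff.rfl

lemma one_sub_mem_skewPrimitives {A : Type*} [Ring A] [Algebra R A] {Δ : A →ₐ[R] A ⊗[R] A}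
    {g : A} (hg : Δ g = g ⊗ₜ g) : 1 - g ∈ skewPrimitives Δ.toLinearMap 1 g := by
  rw [mem_skewPrimitives, AlgHom.toLinearMap_apply, map_sub, map_one, hg,
    Algebra.TensorProduct.one_def, sub_tmul, tmul_sub]
  abel

lemma skewPrimitives_inf_eq_bot {K V : Type*} [Field K] [AddCommGroup V] [Module K V]
    {Δ : V →ₗ[K] V ⊗[K] V} {g h₁ h₂ : V} (hne : h₁ ≠ h₂) :
    skewPrimitives Δ g h₁ ⊓ skewPrimitives Δ g h₂ = ⊥ := by
  refine eq_bot_iff.mpr fun x ⟨hx₁, hx₂⟩ => (Submodule.mem_bot K).mpr ?_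
  by_contra hx
  refine hne (sub_eq_zero.mp (eq_zero_of_tmul_eq_zero (K := K) ?_ hx))
  rw [sub_tmul, sub_eq_zero]
  exact add_left_cancel (hx₁.symm.trans hx₂)

end SkewPrimitives

lemma geom_sum_sq_eq_zero {K : Type*} [Field K] {ξ : K} (hξ : IsPrimitiveRoot ξ 6) {n : ℕ}
    (hn : 3 ∣ n) : ∑ i ∈ Finset.range n, (ξ ^ 2) ^ i = 0 := by
  obtain ⟨m, rfl⟩ := hn
  rw [geom_sum_eq (hξ.pow_ne_one_of_pos_of_lt two_ne_zero (by norm_num)), ← pow_mul,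
    show 2 * (3 * m) = 6 * m by ring, pow_mul, hξ.pow_eq_one, one_pow, sub_self, zero_div]

namespace Paper24

variable {k : Type} [Field k] {ξ : k}

local notation "𝐇" => HAlg k ξ
local notation "𝐚" => Ha k ξ
local notation "𝐛" => Hb k ξ
local notation "𝐜" => Hc k ξ
local notation "𝐝" => Hd k ξ

section Relations

lemma Ha_pow_six : 𝐚 ^ 6 = 1 := by
  simpa [Ha, Hb, Hc, Hd, sq] using RingQuot.mkAlgHom_rel k (HRel.a6 (ξ := ξ))

lemma Hb_mul_Hb : 𝐛 * 𝐛 = 0 := by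
  simpa [Ha, Hb, Hc, Hd, sq] using RingQuot.mkAlgHom_rel k (HRel.b2 (ξ := ξ))

lemma Hc_mul_Hc : 𝐜 * 𝐜 = 0 := by
  simpa [Ha, Hb, Hc, Hd, sq] using RingQuot.mkAlgHom_rel k (HRel.c2 (ξ := ξ))

lemma Hd_mul_Hd : 𝐝 * 𝐝 = 𝐚 * 𝐚 := by
  simpa [Ha, Hb, Hc, Hd, sq] using (RingQuot.mkAlgHom_rel k (HRel.a2d2 (ξ := ξ))).symm

lemma Ha_mul_Hd : 𝐚 * 𝐝 = 𝐝 * 𝐚 := by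
  simpa [Ha, Hb, Hc, Hd, sq] using RingQuot.mkAlgHom_rel k (HRel.ad (ξ := ξ))

lemma Hb_mul_Hc : 𝐛 * 𝐜 = 0 := by
  simpa [Ha, Hb, Hc, Hd, sq] using RingQuot.mkAlgHom_rel k (HRel.bc (ξ := ξ))

lemma Hc_mul_Hb : 𝐜 * 𝐛 = 0 := by
  simpa [Ha, Hb, Hc, Hd, sq] using RingQuot.mkAlgHom_rel k (HRel.cb (ξ := ξ))

lemma Ha_mul_Hb : 𝐚 * 𝐛 = ξ • (𝐛 * 𝐚) := by
  simpa [Ha, Hb, Hc, Hd, sq] using RingQuot.mkAlgHom_rel k (HRel.ab (ξ := ξ))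

lemma Ha_mul_Hc : 𝐚 * 𝐜 = ξ • (𝐜 * 𝐚) := by
  simpa [Ha, Hb, Hc, Hd, sq] using RingQuot.mkAlgHom_rel k (HRel.ac (ξ := ξ))

-- `rw [neg_smul]` fails here: the scalar action is `RingQuot`'s own `SMul` instance.
lemma Hd_mul_Hb : 𝐝 * 𝐛 = (-ξ) • (𝐛 * 𝐝) := by
  have h : 𝐝 * 𝐛 = -(ξ • (𝐛 * 𝐝)) := by
    simpa [Hb, Hc, Hd] using RingQuot.mkAlgHom_rel k (HRel.db (ξ := ξ))
  exact h.trans (neg_smul ξ (𝐛 * 𝐝)).symm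

lemma Hd_mul_Hc : 𝐝 * 𝐜 = (-ξ) • (𝐜 * 𝐝) := by
  have h : 𝐝 * 𝐜 = -(ξ • (𝐜 * 𝐝)) := by
    simpa [Hb, Hc, Hd] using RingQuot.mkAlgHom_rel k (HRel.dc (ξ := ξ))
  exact h.trans (neg_smul ξ (𝐜 * 𝐝)).symm

lemma Hb_mul_Hd : 𝐛 * 𝐝 = 𝐜 * 𝐚 := by
  simpa [Ha, Hb, Hc, Hd, sq] using RingQuot.mkAlgHom_rel k (HRel.bd (ξ := ξ))

lemma Hb_mul_Ha : 𝐛 * 𝐚 = 𝐜 * 𝐝 := by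
  simpa [Ha, Hb, Hc, Hd, sq] using RingQuot.mkAlgHom_rel k (HRel.ba (ξ := ξ))

end Relations

section MulTable

variable (n : ℕ)

lemma Ha_mul_Hb_mul_pow : 𝐚 * (𝐛 * 𝐚 ^ n) = ξ • (𝐛 * 𝐚 ^ (n + 1)) := by
  rw [← mul_assoc, Ha_mul_Hb, smul_mul_assoc, mul_assoc, ← pow_succ']

lemma Ha_mul_Hc_mul_pow : 𝐚 * (𝐜 * 𝐚 ^ n) = ξ • (𝐜 * 𝐚 ^ (n + 1)) := by
  rw [← mul_assoc, Ha_mul_Hc, smul_mul_assoc, mul_assoc, ← pow_succ']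

lemma Ha_mul_Hd_mul_pow : 𝐚 * (𝐝 * 𝐚 ^ n) = 𝐝 * 𝐚 ^ (n + 1) := by
  rw [← mul_assoc, Ha_mul_Hd, mul_assoc, ← pow_succ']

lemma Hb_mul_Hd_mul_pow : 𝐛 * (𝐝 * 𝐚 ^ n) = 𝐜 * 𝐚 ^ (n + 1) := by
  rw [← mul_assoc, Hb_mul_Hd, mul_assoc, ← pow_succ']

lemma Hc_mul_Hd_mul_pow : 𝐜 * (𝐝 * 𝐚 ^ n) = 𝐛 * 𝐚 ^ (n + 1) := by
  rw [← mul_assoc, ← Hb_mul_Ha, mul_assoc, ← pow_succ']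

lemma Hd_mul_Hb_mul_pow : 𝐝 * (𝐛 * 𝐚 ^ n) = (-ξ) • (𝐜 * 𝐚 ^ (n + 1)) := by
  rw [← mul_assoc, Hd_mul_Hb, Hb_mul_Hd, smul_mul_assoc, mul_assoc,
    ← pow_succ']

lemma Hd_mul_Hc_mul_pow : 𝐝 * (𝐜 * 𝐚 ^ n) = (-ξ) • (𝐛 * 𝐚 ^ (n + 1)) := by
  rw [← mul_assoc, Hd_mul_Hc, ← Hb_mul_Ha, smul_mul_assoc, mul_assoc,
    ← pow_succ']

lemma Hd_mul_Hd_mul_pow : 𝐝 * (𝐝 * 𝐚 ^ n) = 𝐚 ^ (n + 2) := by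
  rw [← mul_assoc, Hd_mul_Hd, ← sq, ← pow_add, add_comm]

lemma Hb_mul_Hb_mul (x : 𝐇) : 𝐛 * (𝐛 * x) = 0 := by rw [← mul_assoc, Hb_mul_Hb, zero_mul]
lemma Hb_mul_Hc_mul (x : 𝐇) : 𝐛 * (𝐜 * x) = 0 := by rw [← mul_assoc, Hb_mul_Hc, zero_mul]
lemma Hc_mul_Hb_mul (x : 𝐇) : 𝐜 * (𝐛 * x) = 0 := by rw [← mul_assoc, Hc_mul_Hb, zero_mul]
lemma Hc_mul_Hc_mul (x : 𝐇) : 𝐜 * (𝐜 * x) = 0 := by rw [← mul_assoc, Hc_mul_Hc, zero_mul]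

lemma Ha_pow_add_six : 𝐚 ^ (n + 6) = 𝐚 ^ n := by rw [pow_add, Ha_pow_six, mul_one]

end MulTable

section Basis

lemma fin_four_cases (t : Fin 4) : t = 0 ∨ t = 1 ∨ t = 2 ∨ t = 3 := by decide +revert

variable (k ξ) in
noncomputable def Hgen : Fin 4 → 𝐇 := ![1, 𝐛, 𝐜, 𝐝]

variable (k ξ) in
noncomputable def Hmon (p : Fin 4 × ZMod 6) : 𝐇 := Hgen k ξ p.1 * 𝐚 ^ p.2.val

@[simp] lemma Hgen_zero : Hgen k ξ 0 = 1 := rfl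
@[simp] lemma Hgen_one : Hgen k ξ 1 = 𝐛 := rfl
@[simp] lemma Hgen_two : Hgen k ξ 2 = 𝐜 := rfl
@[simp] lemma Hgen_three : Hgen k ξ 3 = 𝐝 := rfl

lemma mkAlgHom_ι_mem (s : Fin 4) :
    RingQuot.mkAlgHom k (HRel k ξ) (FreeAlgebra.ι k s) ∈ ({𝐚, 𝐛, 𝐜, 𝐝} : Set 𝐇) := by
  obtain rfl | rfl | rfl | rfl := fin_four_cases s
  exacts [.inl rfl, .inr (.inl rfl), .inr (.inr (.inl rfl)), .inr (.inr (.inr rfl))]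

lemma Hgen_mul_pow (t : Fin 4) (n : ℕ) : Hgen k ξ t * 𝐚 ^ n = Hmon k ξ (t, n) := by
  rw [Hmon, ZMod.val_natCast, ← pow_eq_pow_mod n Ha_pow_six]

lemma Hmon_zero_zero : Hmon k ξ (0, 0) = 1 := by simp [Hmon]

lemma mul_Hmon_mem_span {g : 𝐇} (hg : g ∈ ({𝐚, 𝐛, 𝐜, 𝐝} : Set 𝐇)) (p : Fin 4 × ZMod 6) :
    g * Hmon k ξ p ∈ Submodule.span k (Set.range (Hmon k ξ)) := by
  set V := Submodule.span k (Set.range (Hmon k ξ))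
  have mem (t : Fin 4) (n : ℕ) : Hgen k ξ t * 𝐚 ^ n ∈ V := by
    rw [Hgen_mul_pow]; exact Submodule.subset_span ⟨_, rfl⟩
  have mem_pow (n : ℕ) : 𝐚 ^ n ∈ V := by simpa using mem 0 n
  obtain ⟨t, i⟩ := p
  obtain rfl | rfl | rfl | rfl := hg <;> obtain rfl | rfl | rfl | rfl := fin_four_cases t <;>
    simp only [Hmon, Hgen_zero, Hgen_one, Hgen_two, Hgen_three, one_mul, ← pow_succ',
      Ha_mul_Hb_mul_pow, Ha_mul_Hc_mul_pow, Ha_mul_Hd_mul_pow, Hb_mul_Hb_mul, Hb_mul_Hc_mul,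
      Hb_mul_Hd_mul_pow, Hc_mul_Hb_mul, Hc_mul_Hc_mul, Hc_mul_Hd_mul_pow, Hd_mul_Hb_mul_pow,
      Hd_mul_Hc_mul_pow, Hd_mul_Hd_mul_pow] <;>
    first
    | exact V.zero_mem | exact mem_pow _ | exact mem 1 _ | exact mem 2 _ | exact mem 3 _
    | exact V.smul_mem _ (mem 1 _) | exact V.smul_mem _ (mem 2 _)

lemma span_range_Hmon : Submodule.span k (Set.range (Hmon k ξ)) = ⊤ := by
  set V := Submodule.span k (Set.range (Hmon k ξ))
  have gen_mul_mem {g : 𝐇} (hg : g ∈ ({𝐚, 𝐛, 𝐜, 𝐝} : Set 𝐇)) (z : 𝐇) (hz : z ∈ V) :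
      g * z ∈ V := by
    induction hz using Submodule.span_induction with
    | mem u hu => obtain ⟨p, rfl⟩ := hu; exact mul_Hmon_mem_span hg p
    | zero => rw [mul_zero]; exact V.zero_mem
    | add u v _ _ hu hv => rw [mul_add]; exact V.add_mem hu hv
    | smul r u _ hu => rw [mul_smul_comm]; exact V.smul_mem r hu
  rw [eq_top_iff]
  rintro x -
  obtain ⟨y, rfl⟩ := RingQuot.mkAlgHom_surjective k (HRel k ξ) x
  suffices ∀ z ∈ V, RingQuot.mkAlgHom k (HRel k ξ) y * z ∈ V by
    simpa using this 1 (by rw [← Hmon_zero_zero]; exact Submodule.subset_span ⟨_, rfl⟩)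
  induction y using FreeAlgebra.induction with
  | grade0 r =>
    intro z hz
    rw [AlgHom.commutes, Algebra.algebraMap_eq_smul_one, smul_one_mul]
    exact V.smul_mem r hz
  | grade1 s => exact gen_mul_mem (mkAlgHom_ι_mem s)
  | mul u v hu hv => intro z hz; rw [map_mul, mul_assoc]; exact hu _ (hv z hz)
  | add u v hu hv => intro z hz; rw [map_add, add_mul]; exact V.add_mem (hu z hz) (hv z hz)

section RegularRepresentation

def shiftMul (c : Fin 4 × ZMod 6 → k) (s : Fin 4 × ZMod 6 → Fin 4 × ZMod 6) :
    Module.End k (Fin 4 × ZMod 6 → k) :=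
  LinearMap.mulLeft k c ∘ₗ LinearMap.funLeft k k s

@[simp] lemma shiftMul_apply (c : Fin 4 × ZMod 6 → k) (s : Fin 4 × ZMod 6 → Fin 4 × ZMod 6)
    (f : Fin 4 × ZMod 6 → k) (p : Fin 4 × ZMod 6) : shiftMul c s f p = c p * f (s p) := rfl

-- Left multiplication by `a`, `b`, `c`, `d` in the coordinates of the monomials `Hmon`,
-- read off from the multiplication table above.
variable (ξ) in
def regA : Module.End k (Fin 4 × ZMod 6 → k) :=
  shiftMul (fun p => if p.1 = 1 ∨ p.1 = 2 then ξ else 1) (fun p => (p.1, p.2 - 1))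

def regB : Module.End k (Fin 4 × ZMod 6 → k) :=
  shiftMul (fun p => if p.1 = 1 ∨ p.1 = 2 then 1 else 0)
    (fun p => if p.1 = 1 then (0, p.2) else (3, p.2 - 1))

def regC : Module.End k (Fin 4 × ZMod 6 → k) :=
  shiftMul (fun p => if p.1 = 1 ∨ p.1 = 2 then 1 else 0)
    (fun p => if p.1 = 2 then (0, p.2) else (3, p.2 - 1))

variable (ξ) in
def regD : Module.End k (Fin 4 × ZMod 6 → k) :=
  shiftMul (fun p => if p.1 = 1 ∨ p.1 = 2 then -ξ else 1)
    (fun p => if p.1 = 3 then (0, p.2) else if p.1 = 0 then (3, p.2 - 2)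
      else if p.1 = 1 then (2, p.2 - 1) else (1, p.2 - 1))

variable (ξ) in
noncomputable def regFree : FreeAlgebra k (Fin 4) →ₐ[k] Module.End k (Fin 4 × ZMod 6 → k) :=
  FreeAlgebra.lift k ![regA ξ, regB, regC, regD ξ]

lemma regFree_rel (h6 : ξ ^ 6 = 1) ⦃x y : FreeAlgebra k (Fin 4)⦄ (h : HRel k ξ x y) :
    regFree ξ x = regFree ξ y := by
  induction h <;>
  · simp only [regFree, a₀, b₀, c₀, d₀, map_mul, map_pow, map_smul, map_one, map_zero, map_neg,
      FreeAlgebra.lift_ι_apply]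
    refine LinearMap.ext fun f => funext fun ⟨t, i⟩ => ?_
    fin_cases t <;>
      simp [pow_succ, Module.End.mul_apply, regA, regB, regC, regD, sub_sub] <;> ring_nf <;>
      simp [show ((-6 : ZMod 6)) = 0 by decide, h6]

variable (k ξ) in
noncomputable def regH (h6 : ξ ^ 6 = 1) : 𝐇 →ₐ[k] Module.End k (Fin 4 × ZMod 6 → k) :=
  RingQuot.liftAlgHom k ⟨regFree ξ, regFree_rel h6⟩

lemma regH_Ha_pow_single (h6 : ξ ^ 6 = 1) (n : ℕ) :
    regH k ξ h6 (𝐚 ^ n) (Pi.single (0, 0) 1) = Pi.single (0, (n : ZMod 6)) 1 := by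
  induction n with
  | zero => simp
  | succ n ih =>
    rw [pow_succ', map_mul, Module.End.mul_apply, ih]
    funext ⟨t, i⟩
    fin_cases t <;> simp [regH, Ha, regFree, a₀, regA, Pi.single_apply, sub_eq_iff_eq_add]

lemma regH_Hmon_single (h6 : ξ ^ 6 = 1) (p : Fin 4 × ZMod 6) :
    regH k ξ h6 (Hmon k ξ p) (Pi.single (0, 0) 1) = Pi.single p 1 := by
  obtain ⟨t, i⟩ := p
  rw [Hmon, map_mul, Module.End.mul_apply, regH_Ha_pow_single, ZMod.natCast_val, ZMod.cast_id]
  funext ⟨s, j⟩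
  obtain rfl | rfl | rfl | rfl := fin_four_cases t <;> fin_cases s <;>
    simp [regH, Hb, Hc, Hd, regFree, b₀, c₀, d₀, regB, regC, regD, Pi.single_apply]

lemma linearIndependent_Hmon (h6 : ξ ^ 6 = 1) : LinearIndependent k (Hmon k ξ) := by
  refine LinearIndependent.of_comp ((LinearMap.applyₗ (Pi.single (0, 0) 1)) ∘ₗ
    (regH k ξ h6).toLinearMap) ?_
  convert (Pi.basisFun k (Fin 4 × ZMod 6)).linearIndependent using 1
  funext p
  simp [regH_Hmon_single]

end RegularRepresentation

variable (k ξ) in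
noncomputable def Hbasis (h6 : ξ ^ 6 = 1) : Module.Basis (Fin 4 × ZMod 6) k 𝐇 :=
  .mk (linearIndependent_Hmon h6) span_range_Hmon.ge

@[simp] lemma Hbasis_apply (h6 : ξ ^ 6 = 1) (p : Fin 4 × ZMod 6) :
    Hbasis k ξ h6 p = Hmon k ξ p :=
  Module.Basis.mk_apply _ _ _

lemma Hbasis_repr_Hgen_mul_pow (h6 : ξ ^ 6 = 1) (t : Fin 4) (n : ℕ) :
    (Hbasis k ξ h6).repr (Hgen k ξ t * 𝐚 ^ n) = Finsupp.single (t, (n : ZMod 6)) 1 := by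
  rw [Hgen_mul_pow, ← Hbasis_apply h6, Module.Basis.repr_self]

lemma Hgen_mul_pow_ne (h6 : ξ ^ 6 = 1) {s t : Fin 4} {m n : ℕ}
    (h : (s, (m : ZMod 6)) ≠ (t, (n : ZMod 6))) : Hgen k ξ s * 𝐚 ^ m ≠ Hgen k ξ t * 𝐚 ^ n := by
  rw [Hgen_mul_pow, Hgen_mul_pow, ← Hbasis_apply h6, ← Hbasis_apply h6]
  exact (Hbasis k ξ h6).injective.ne h

lemma Hbasis_repr_Ha_pow (h6 : ξ ^ 6 = 1) (n : ℕ) :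
    (Hbasis k ξ h6).repr (𝐚 ^ n) = Finsupp.single (0, (n : ZMod 6)) 1 := by
  simpa using Hbasis_repr_Hgen_mul_pow h6 0 n

lemma Hbasis_repr_Hb_mul_Ha_pow (h6 : ξ ^ 6 = 1) (n : ℕ) :
    (Hbasis k ξ h6).repr (𝐛 * 𝐚 ^ n) = Finsupp.single (1, (n : ZMod 6)) 1 :=
  Hbasis_repr_Hgen_mul_pow h6 1 n

lemma Hbasis_repr_Hc_mul_Ha_pow (h6 : ξ ^ 6 = 1) (n : ℕ) :
    (Hbasis k ξ h6).repr (𝐜 * 𝐚 ^ n) = Finsupp.single (2, (n : ZMod 6)) 1 :=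
  Hbasis_repr_Hgen_mul_pow h6 2 n

lemma Hbasis_repr_Hd_mul_Ha_pow (h6 : ξ ^ 6 = 1) (n : ℕ) :
    (Hbasis k ξ h6).repr (𝐝 * 𝐚 ^ n) = Finsupp.single (3, (n : ZMod 6)) 1 :=
  Hbasis_repr_Hgen_mul_pow h6 3 n

end Basis

section Comultiplication

open Finset

variable (Δ : HAlg k ξ →ₐ[k] (HAlg k ξ ⊗[k] HAlg k ξ))
  (hΔa : Δ (Ha k ξ) = Ha k ξ ⊗ₜ[k] Ha k ξ + Hb k ξ ⊗ₜ[k] Hc k ξ)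
  (hΔb : Δ (Hb k ξ) = Ha k ξ ⊗ₜ[k] Hb k ξ + Hb k ξ ⊗ₜ[k] Hd k ξ)
  (hΔc : Δ (Hc k ξ) = Hc k ξ ⊗ₜ[k] Ha k ξ + Hd k ξ ⊗ₜ[k] Hc k ξ)
  (hΔd : Δ (Hd k ξ) = Hd k ξ ⊗ₜ[k] Hd k ξ + Hc k ξ ⊗ₜ[k] Hb k ξ)
include hΔa

-- `a^(n+5) = a^(n-1)` as `a^6 = 1`; this form avoids truncated subtraction at `n = 0`.
lemma comul_Ha_pow (n : ℕ) : Δ (𝐚 ^ n) = (𝐚 ^ n) ⊗ₜ[k] (𝐚 ^ n) +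
    (∑ i ∈ range n, (ξ ^ 2) ^ i) • ((𝐛 * 𝐚 ^ (n + 5)) ⊗ₜ[k] (𝐜 * 𝐚 ^ (n + 5))) := by
  induction n with
  | zero => simp [Algebra.TensorProduct.one_def]
  | succ n ih =>
    rw [pow_succ', map_mul, hΔa, ih, geom_sum_succ]
    simp only [mul_add, add_mul, Algebra.TensorProduct.tmul_mul_tmul, mul_smul_comm,
      Ha_mul_Hb_mul_pow, Ha_mul_Hc_mul_pow, Hb_mul_Hb_mul, Hc_mul_Hc_mul, ← pow_succ',
      ← TensorProduct.smul_tmul', TensorProduct.tmul_smul, smul_smul, TensorProduct.zero_tmul,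
      add_zero, show n + 1 + 5 = n + 6 by ring, Ha_pow_add_six]
    module

include hΔb in
lemma comul_Hb_mul_Ha_pow (n : ℕ) : Δ (𝐛 * 𝐚 ^ n) =
    (𝐚 ^ (n + 1)) ⊗ₜ[k] (𝐛 * 𝐚 ^ n) + (𝐛 * 𝐚 ^ n) ⊗ₜ[k] (𝐝 * 𝐚 ^ n) := by
  rw [map_mul, hΔb, comul_Ha_pow Δ hΔa n]
  simp only [mul_add, add_mul, Algebra.TensorProduct.tmul_mul_tmul, mul_smul_comm,
    Hb_mul_Hb_mul, Hb_mul_Hc_mul, ← pow_succ', TensorProduct.zero_tmul, TensorProduct.tmul_zero,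
    smul_zero, add_zero]

include hΔc in
lemma comul_Hc_mul_Ha_pow (n : ℕ) : Δ (𝐜 * 𝐚 ^ n) =
    (𝐜 * 𝐚 ^ n) ⊗ₜ[k] (𝐚 ^ (n + 1)) + (𝐝 * 𝐚 ^ n) ⊗ₜ[k] (𝐜 * 𝐚 ^ n) := by
  rw [map_mul, hΔc, comul_Ha_pow Δ hΔa n]
  simp only [mul_add, add_mul, Algebra.TensorProduct.tmul_mul_tmul, mul_smul_comm,
    Hc_mul_Hb_mul, Hc_mul_Hc_mul, ← pow_succ', TensorProduct.zero_tmul, TensorProduct.tmul_zero,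
    smul_zero, add_zero]

include hΔd in
lemma comul_Hd_mul_Ha_pow (n : ℕ) : Δ (𝐝 * 𝐚 ^ n) = (𝐝 * 𝐚 ^ n) ⊗ₜ[k] (𝐝 * 𝐚 ^ n) +
    (∑ i ∈ range (n + 1), (ξ ^ 2) ^ i) • ((𝐜 * 𝐚 ^ n) ⊗ₜ[k] (𝐛 * 𝐚 ^ n)) := by
  rw [map_mul, hΔd, comul_Ha_pow Δ hΔa n, geom_sum_succ]
  simp only [mul_add, add_mul, Algebra.TensorProduct.tmul_mul_tmul, mul_smul_comm,
    Hd_mul_Hb_mul_pow, Hd_mul_Hc_mul_pow, Hc_mul_Hb_mul,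
    ← TensorProduct.smul_tmul', TensorProduct.tmul_smul, smul_smul, TensorProduct.zero_tmul,
    add_zero, show n + 5 + 1 = n + 6 by ring, Ha_pow_add_six]
  module

include hΔc in
lemma Hc_mul_Ha_pow_five_mem_skewPrimitives :
    𝐜 * 𝐚 ^ 5 ∈ skewPrimitives Δ.toLinearMap 1 (𝐝 * 𝐚 ^ 5) := by
  rw [mem_skewPrimitives, AlgHom.toLinearMap_apply, comul_Hc_mul_Ha_pow Δ hΔa hΔc, Ha_pow_six]

variable (h6 : ξ ^ 6 = 1)
include hΔb hΔc hΔd h6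

lemma rid_lTensor_coord_comul (x : 𝐇) :
    TensorProduct.rid k 𝐇 (LinearMap.lTensor 𝐇 ((Hbasis k ξ h6).coord (0, 0)) (Δ x)) =
      (Hbasis k ξ h6).coord (0, 0) x • 1 + (Hbasis k ξ h6).coord (2, 5) x • (𝐜 * 𝐚 ^ 5) := by
  let f := (Hbasis k ξ h6).coord (0, 0)
  suffices (TensorProduct.rid k 𝐇).toLinearMap ∘ₗ LinearMap.lTensor 𝐇 f ∘ₗ Δ.toLinearMap =
      f.smulRight 1 + ((Hbasis k ξ h6).coord (2, 5)).smulRight (𝐜 * 𝐚 ^ 5) from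
    LinearMap.congr_fun this x
  refine (Hbasis k ξ h6).ext fun ⟨t, i⟩ => ?_
  obtain rfl | rfl | rfl | rfl := fin_four_cases t <;>
    simp only [Hbasis_apply, Hmon, Hgen_zero, Hgen_one, Hgen_two, Hgen_three, one_mul,
      LinearMap.coe_comp, LinearEquiv.coe_coe, AlgHom.coe_toLinearMap, Function.comp_apply,
      comul_Ha_pow Δ hΔa, comul_Hb_mul_Ha_pow Δ hΔa hΔb, comul_Hc_mul_Ha_pow Δ hΔa hΔc,
      comul_Hd_mul_Ha_pow Δ hΔa hΔd, map_add, map_smul, map_zero, LinearMap.lTensor_tmul,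
      Module.Basis.coord_apply, Hbasis_repr_Ha_pow h6, Hbasis_repr_Hb_mul_Ha_pow h6,
      Hbasis_repr_Hc_mul_Ha_pow h6, Hbasis_repr_Hd_mul_Ha_pow h6, Nat.cast_add, Nat.cast_one,
      Nat.cast_ofNat, ZMod.natCast_val, ZMod.cast_id', id_eq, Finsupp.single_apply, Prod.mk.injEq,
      true_and, false_and, Fin.reduceEq, TensorProduct.tmul_zero, TensorProduct.rid_tmul, smul_zero,
      add_zero, zero_add, ite_smul, one_smul, zero_smul, LinearMap.add_apply,
      LinearMap.coe_smulRight, ↓reduceIte, f]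
  · split_ifs with h
    · rw [h, ZMod.val_zero, pow_zero]
    · rfl
  · simp only [show i + 1 = 0 ↔ i = 5 by decide +revert]
    split_ifs with h
    · rw [h]; rfl
    · rfl

lemma eq_of_mem_skewPrimitives {g x : 𝐇} (hx : x ∈ skewPrimitives Δ.toLinearMap 1 g) :
    x = (Hbasis k ξ h6).coord (0, 0) x • (1 - g) +
      (Hbasis k ξ h6).coord (2, 5) x • (𝐜 * 𝐚 ^ 5) := by
  have h := rid_lTensor_coord_comul Δ hΔa hΔb hΔc hΔd h6 x
  rw [← AlgHom.toLinearMap_apply, mem_skewPrimitives.mp hx] at h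
  have h1 : (Hbasis k ξ h6).coord (0, 0) 1 = 1 := by
    rw [Module.Basis.coord_apply, ← pow_zero 𝐚, Hbasis_repr_Ha_pow h6 0]; simp
  simp only [map_add, LinearMap.lTensor_tmul, TensorProduct.rid_tmul, h1, one_smul] at h
  linear_combination (norm := module) h

theorem skewPrimitives_Hd_mul_Ha_pow_five
    (hg : Δ (𝐝 * 𝐚 ^ 5) = (𝐝 * 𝐚 ^ 5) ⊗ₜ[k] (𝐝 * 𝐚 ^ 5)) :
    skewPrimitives Δ.toLinearMap 1 (𝐝 * 𝐚 ^ 5) = Submodule.span k {1 - 𝐝 * 𝐚 ^ 5, 𝐜 * 𝐚 ^ 5} := by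
  refine le_antisymm (fun x hx => ?_) (Submodule.span_le.mpr ?_)
  · exact Submodule.mem_span_pair.mpr
      ⟨_, _, (eq_of_mem_skewPrimitives Δ hΔa hΔb hΔc hΔd h6 hx).symm⟩
  · rintro _ (rfl | rfl)
    exacts [one_sub_mem_skewPrimitives hg, Hc_mul_Ha_pow_five_mem_skewPrimitives Δ hΔa hΔc]

theorem skewPrimitives_eq_span_one_sub {g : 𝐇} (hg : Δ g = g ⊗ₜ[k] g) (hne : g ≠ 𝐝 * 𝐚 ^ 5) :
    skewPrimitives Δ.toLinearMap 1 g = Submodule.span k {1 - g} := by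
  refine le_antisymm (fun x hx => ?_) (Submodule.span_le.mpr ?_)
  · have hx' := eq_of_mem_skewPrimitives Δ hΔa hΔb hΔc hΔd h6 hx
    set y := (Hbasis k ξ h6).coord (2, 5) x • (𝐜 * 𝐚 ^ 5)
    have hy : y = 0 := by
      rw [← Submodule.mem_bot k, ← skewPrimitives_inf_eq_bot hne]
      refine ⟨?_, Submodule.smul_mem _ _ (Hc_mul_Ha_pow_five_mem_skewPrimitives Δ hΔa hΔc)⟩
      rw [eq_sub_of_add_eq' hx'.symm]
      exact sub_mem hx (Submodule.smul_mem _ _ (one_sub_mem_skewPrimitives hg))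
    rw [hx', hy, add_zero]
    exact Submodule.smul_mem _ _ (Submodule.mem_span_singleton_self _)
  · simpa using one_sub_mem_skewPrimitives hg

end Comultiplication

end Paper24

theorem stmt_3_general (k : Type) [Field k]
    (ξ : k) (hξ : IsPrimitiveRoot ξ 6)
    (Δ : HAlg k ξ →ₐ[k] (HAlg k ξ ⊗[k] HAlg k ξ))
    (hΔa : Δ (Ha k ξ) = Ha k ξ ⊗ₜ[k] Ha k ξ + Hb k ξ ⊗ₜ[k] Hc k ξ)
    (hΔb : Δ (Hb k ξ) = Ha k ξ ⊗ₜ[k] Hb k ξ + Hb k ξ ⊗ₜ[k] Hd k ξ)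
    (hΔc : Δ (Hc k ξ) = Hc k ξ ⊗ₜ[k] Ha k ξ + Hd k ξ ⊗ₜ[k] Hc k ξ)
    (hΔd : Δ (Hd k ξ) = Hd k ξ ⊗ₜ[k] Hd k ξ + Hc k ξ ⊗ₜ[k] Hb k ξ) :
    {x : HAlg k ξ | Δ x = x ⊗ₜ[k] (1 : HAlg k ξ) + (Hd k ξ * Ha k ξ ^ 5) ⊗ₜ[k] x}
        = ↑(Submodule.span k {1 - Hd k ξ * Ha k ξ ^ 5, Hc k ξ * Ha k ξ ^ 5}) ∧
    {x : HAlg k ξ | Δ x = x ⊗ₜ[k] (1 : HAlg k ξ) + (Ha k ξ ^ 3) ⊗ₜ[k] x}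
        = ↑(Submodule.span k {1 - Ha k ξ ^ 3}) ∧
    {x : HAlg k ξ | Δ x = x ⊗ₜ[k] (1 : HAlg k ξ) + (Hd k ξ * Ha k ξ ^ 2) ⊗ₜ[k] x}
        = ↑(Submodule.span k {1 - Hd k ξ * Ha k ξ ^ 2}) := by
  have h6 : ξ ^ 6 = 1 := hξ.pow_eq_one
  have hd (n : ℕ) (hn : 3 ∣ n + 1) :
      Δ (Hd k ξ * Ha k ξ ^ n) = (Hd k ξ * Ha k ξ ^ n) ⊗ₜ[k] (Hd k ξ * Ha k ξ ^ n) := by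
    rw [comul_Hd_mul_Ha_pow Δ hΔa hΔd, geom_sum_sq_eq_zero hξ hn, zero_smul, add_zero]
  have ha3 : Δ (Ha k ξ ^ 3) = (Ha k ξ ^ 3) ⊗ₜ[k] (Ha k ξ ^ 3) := by
    rw [comul_Ha_pow Δ hΔa, geom_sum_sq_eq_zero hξ dvd_rfl, zero_smul, add_zero]
  have ha3_ne : Ha k ξ ^ 3 ≠ Hd k ξ * Ha k ξ ^ 5 := by
    simpa using Hgen_mul_pow_ne h6 (s := 0) (t := 3) (m := 3) (n := 5) (by decide)
  have hd2_ne : Hd k ξ * Ha k ξ ^ 2 ≠ Hd k ξ * Ha k ξ ^ 5 := by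
    simpa using Hgen_mul_pow_ne h6 (s := 3) (t := 3) (m := 2) (n := 5) (by decide)
  exact ⟨congrArg SetLike.coe <|
      skewPrimitives_Hd_mul_Ha_pow_five Δ hΔa hΔb hΔc hΔd h6 (hd 5 ⟨2, rfl⟩),
    congrArg SetLike.coe <| skewPrimitives_eq_span_one_sub Δ hΔa hΔb hΔc hΔd h6 ha3 ha3_ne,
    congrArg SetLike.coe <|
      skewPrimitives_eq_span_one_sub Δ hΔa hΔb hΔc hΔd h6 (hd 2 ⟨1, rfl⟩) hd2_ne⟩

theorem stmt_3 (k : Type) [Field k] [IsAlgClosed k] [CharZero k]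
    (ξ : k) (hξ : IsPrimitiveRoot ξ 6)
    (Δ : HAlg k ξ →ₐ[k] (HAlg k ξ ⊗[k] HAlg k ξ))
    (hΔa : Δ (Ha k ξ) = Ha k ξ ⊗ₜ[k] Ha k ξ + Hb k ξ ⊗ₜ[k] Hc k ξ)
    (hΔb : Δ (Hb k ξ) = Ha k ξ ⊗ₜ[k] Hb k ξ + Hb k ξ ⊗ₜ[k] Hd k ξ)
    (hΔc : Δ (Hc k ξ) = Hc k ξ ⊗ₜ[k] Ha k ξ + Hd k ξ ⊗ₜ[k] Hc k ξ)
    (hΔd : Δ (Hd k ξ) = Hd k ξ ⊗ₜ[k] Hd k ξ + Hc k ξ ⊗ₜ[k] Hb k ξ) :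
    {x : HAlg k ξ | Δ x = x ⊗ₜ[k] (1 : HAlg k ξ) + (Hd k ξ * Ha k ξ ^ 5) ⊗ₜ[k] x}
        = ↑(Submodule.span k {1 - Hd k ξ * Ha k ξ ^ 5, Hc k ξ * Ha k ξ ^ 5}) ∧
    {x : HAlg k ξ | Δ x = x ⊗ₜ[k] (1 : HAlg k ξ) + (Ha k ξ ^ 3) ⊗ₜ[k] x}
        = ↑(Submodule.span k {1 - Ha k ξ ^ 3}) ∧
    {x : HAlg k ξ | Δ x = x ⊗ₜ[k] (1 : HAlg k ξ) + (Hd k ξ * Ha k ξ ^ 2) ⊗ₜ[k] x}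
        = ↑(Submodule.span k {1 - Hd k ξ * Ha k ξ ^ 2}) :=
  stmt_3_general k ξ hξ Δ hΔa hΔb hΔc hΔd
end

section
/- There are exactly 12 algebra homomorphisms from H to k, namely, for each m ∈ {0,...,5} and n ∈ {0,1}, the homomorphism sending a ↦ ξ^m, d ↦ (−1)^n ξ^m, b ↦ 0, c ↦ 0; moreover, under the convolution product (φ * ψ)(x) = Σ φ(x_{(1)}) ψ(x_{(2)}) these 12 homomorphisms form a group isomorphic to Z/6 × Z/2. -/
/- STATEMENT 5: There are exactly 12 algebra homomorphisms H → k, given on generators by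
a ↦ ξ^m, d ↦ (−1)^n ξ^m, b ↦ 0, c ↦ 0 (m ∈ {0,...,5}, n ∈ {0,1}); under the convolution
product they form a group isomorphic to Z/6 × Z/2. -/

open scoped TensorProduct
namespace Paper24

variable (k : Type) [Field k] (ξ : k)

variable {k ξ} in
noncomputable def chi (α δ : k) (h1 : α ^ 6 = 1) (h2 : δ ^ 6 = 1) (h3 : α ^ 2 = δ ^ 2) :
    HAlg k ξ →ₐ[k] k :=
  RingQuot.liftAlgHom k ⟨FreeAlgebra.lift k ![α, 0, 0, δ], by
    intro x y h
    induction h <;>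
      simp [a₀, b₀, c₀, d₀, h1, h2, h3, mul_comm]⟩

section Aux
variable {k ξ}

@[simp] lemma chi_a (α δ : k) (h1 : α ^ 6 = 1) (h2 : δ ^ 6 = 1) (h3 : α ^ 2 = δ ^ 2) :
    chi (ξ := ξ) α δ h1 h2 h3 (Ha k ξ) = α := by
  simp [chi, Ha, a₀]
@[simp] lemma chi_b (α δ : k) (h1 : α ^ 6 = 1) (h2 : δ ^ 6 = 1) (h3 : α ^ 2 = δ ^ 2) :
    chi (ξ := ξ) α δ h1 h2 h3 (Hb k ξ) = 0 := by
  simp [chi, Hb, b₀]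
@[simp] lemma chi_c (α δ : k) (h1 : α ^ 6 = 1) (h2 : δ ^ 6 = 1) (h3 : α ^ 2 = δ ^ 2) :
    chi (ξ := ξ) α δ h1 h2 h3 (Hc k ξ) = 0 := by
  simp [chi, Hc, c₀]
@[simp] lemma chi_d (α δ : k) (h1 : α ^ 6 = 1) (h2 : δ ^ 6 = 1) (h3 : α ^ 2 = δ ^ 2) :
    chi (ξ := ξ) α δ h1 h2 h3 (Hd k ξ) = δ := by
  simp [chi, Hd, d₀]

lemma hom_ext {φ ψ : HAlg k ξ →ₐ[k] k}
    (ha : φ (Ha k ξ) = ψ (Ha k ξ)) (hb : φ (Hb k ξ) = ψ (Hb k ξ))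
    (hc : φ (Hc k ξ) = ψ (Hc k ξ)) (hd : φ (Hd k ξ) = ψ (Hd k ξ)) : φ = ψ := by
  apply RingQuot.ringQuot_ext'
  apply FreeAlgebra.hom_ext
  funext i
  fin_cases i
  · exact ha
  · exact hb
  · exact hc
  · exact hd

lemma Ha_pow6 : Ha k ξ ^ 6 = 1 := by
  rw [Ha, ← map_pow, RingQuot.mkAlgHom_rel k HRel.a6, map_one]
lemma Hd_pow6 : Hd k ξ ^ 6 = 1 := by
  rw [Hd, ← map_pow, RingQuot.mkAlgHom_rel k HRel.d6, map_one]
lemma Hb_sq : Hb k ξ ^ 2 = 0 := by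
  rw [Hb, ← map_pow, RingQuot.mkAlgHom_rel k HRel.b2, map_zero]
lemma Hc_sq : Hc k ξ ^ 2 = 0 := by
  rw [Hc, ← map_pow, RingQuot.mkAlgHom_rel k HRel.c2, map_zero]
lemma Ha_sq : Ha k ξ ^ 2 = Hd k ξ ^ 2 := by
  rw [Ha, Hd, ← map_pow, ← map_pow, RingQuot.mkAlgHom_rel k HRel.a2d2]

lemma pow6_mod (h : ξ ^ 6 = 1) (x : ℕ) : ξ ^ (x % 6) = ξ ^ x := by
  conv_rhs => rw [← Nat.mod_add_div x 6]
  rw [pow_add, pow_mul, h, one_pow, mul_one]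

noncomputable def chiMN (hξ : IsPrimitiveRoot ξ 6) (m n : ℕ) : HAlg k ξ →ₐ[k] k :=
  chi (ξ ^ m) ((-1) ^ n * ξ ^ m)
    (by rw [← pow_mul, mul_comm, pow_mul, hξ.pow_eq_one, one_pow])
    (by have hn6 : ((-1 : k)) ^ 6 = 1 := by norm_num
        rw [mul_pow, ← pow_mul, ← pow_mul, mul_comm n 6, mul_comm m 6, pow_mul, pow_mul,
          hξ.pow_eq_one, hn6, one_pow, one_pow, one_mul])
    (by rw [mul_pow, ← pow_mul ((-1 : k)), mul_comm n 2, pow_mul, neg_one_sq, one_pow, one_mul])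

@[simp] lemma chiMN_a (hξ : IsPrimitiveRoot ξ 6) (m n : ℕ) :
    chiMN hξ m n (Ha k ξ) = ξ ^ m := chi_a ..
@[simp] lemma chiMN_b (hξ : IsPrimitiveRoot ξ 6) (m n : ℕ) :
    chiMN hξ m n (Hb k ξ) = 0 := chi_b ..
@[simp] lemma chiMN_c (hξ : IsPrimitiveRoot ξ 6) (m n : ℕ) :
    chiMN hξ m n (Hc k ξ) = 0 := chi_c ..
@[simp] lemma chiMN_d (hξ : IsPrimitiveRoot ξ 6) (m n : ℕ) :
    chiMN hξ m n (Hd k ξ) = (-1) ^ n * ξ ^ m := chi_d ..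

lemma chiMN_mod (hξ : IsPrimitiveRoot ξ 6) (m n : ℕ) :
    chiMN hξ (m % 6) (n % 2) = chiMN hξ m n := by
  have h2 : ((-1 : k)) ^ (n % 2) = (-1) ^ n := by
    conv_rhs => rw [← Nat.mod_add_div n 2]
    rw [pow_add, pow_mul, neg_one_sq, one_pow, mul_one]
  apply hom_ext <;> simp [pow6_mod hξ.pow_eq_one, h2]

lemma classify (hξ : IsPrimitiveRoot ξ 6) (φ : HAlg k ξ →ₐ[k] k) :
    ∃ m n : ℕ, m < 6 ∧ n < 2 ∧ φ = chiMN hξ m n := by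
  have hb : φ (Hb k ξ) = 0 := by
    have h : φ (Hb k ξ) ^ 2 = 0 := by rw [← map_pow, Hb_sq, map_zero]
    exact pow_eq_zero_iff two_ne_zero |>.mp h
  have hc : φ (Hc k ξ) = 0 := by
    have h : φ (Hc k ξ) ^ 2 = 0 := by rw [← map_pow, Hc_sq, map_zero]
    exact pow_eq_zero_iff two_ne_zero |>.mp h
  have ha6 : φ (Ha k ξ) ^ 6 = 1 := by rw [← map_pow, Ha_pow6, map_one]
  obtain ⟨m, hm, hma⟩ := hξ.eq_pow_of_pow_eq_one ha6
  have hsq : φ (Ha k ξ) ^ 2 = φ (Hd k ξ) ^ 2 := by rw [← map_pow, ← map_pow, Ha_sq]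
  have hpm : (φ (Hd k ξ) - φ (Ha k ξ)) * (φ (Hd k ξ) + φ (Ha k ξ)) = 0 := by
    linear_combination -hsq
  rcases mul_eq_zero.mp hpm with h | h
  · refine ⟨m, 0, hm, by norm_num, hom_ext ?_ ?_ ?_ ?_⟩ <;>
      simp [← hma, hb, hc, sub_eq_zero.mp h]
  · refine ⟨m, 1, hm, by norm_num, hom_ext ?_ ?_ ?_ ?_⟩ <;>
      simp [← hma, hb, hc, eq_neg_of_add_eq_zero_left h]

lemma chiMN_inj [CharZero k] (hξ : IsPrimitiveRoot ξ 6) {m n m' n' : ℕ} (hm : m < 6) (hn : n < 2)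
    (hm' : m' < 6) (hn' : n' < 2) (h : chiMN hξ m n = chiMN hξ m' n') : m = m' ∧ n = n' := by
  have hξ0 : ξ ≠ 0 := hξ.ne_zero (by norm_num)
  have h1 : ξ ^ m = ξ ^ m' := by
    have := congrArg (· (Ha k ξ)) h; simpa using this
  have hmm : m = m' := hξ.pow_inj hm hm' h1
  have h2 : ((-1 : k)) ^ n * ξ ^ m = (-1) ^ n' * ξ ^ m' := by
    have := congrArg (· (Hd k ξ)) h; simpa using this
  rw [← hmm, mul_left_inj' (pow_ne_zero _ hξ0)] at h2
  refine ⟨hmm, ?_⟩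
  interval_cases n <;> interval_cases n' <;> first | rfl | (norm_num at h2)

end Aux


end Paper24

open Paper24

/-- Convolution of two characters of `H`, with respect to a comultiplication `Δ`. -/
noncomputable def conv (k : Type) [Field k] (ξ : k)
    (Δ : HAlg k ξ →ₐ[k] (HAlg k ξ ⊗[k] HAlg k ξ))
    (φ ψ : HAlg k ξ →ₐ[k] k) : HAlg k ξ →ₐ[k] k :=
  (Algebra.TensorProduct.lmul' k).comp ((Algebra.TensorProduct.map φ ψ).comp Δ)


lemma conv_chiMN {k : Type} [Field k] {ξ : k} (hξ : IsPrimitiveRoot ξ 6)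
    (Δ : HAlg k ξ →ₐ[k] (HAlg k ξ ⊗[k] HAlg k ξ))
    (hΔa : Δ (Ha k ξ) = Ha k ξ ⊗ₜ[k] Ha k ξ + Hb k ξ ⊗ₜ[k] Hc k ξ)
    (hΔb : Δ (Hb k ξ) = Ha k ξ ⊗ₜ[k] Hb k ξ + Hb k ξ ⊗ₜ[k] Hd k ξ)
    (hΔc : Δ (Hc k ξ) = Hc k ξ ⊗ₜ[k] Ha k ξ + Hd k ξ ⊗ₜ[k] Hc k ξ)
    (hΔd : Δ (Hd k ξ) = Hd k ξ ⊗ₜ[k] Hd k ξ + Hc k ξ ⊗ₜ[k] Hb k ξ)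
    (m n m' n' : ℕ) :
    conv k ξ Δ (chiMN hξ m n) (chiMN hξ m' n') = chiMN hξ (m + m') (n + n') := by
  apply hom_ext
  · simp [conv, hΔa, Algebra.TensorProduct.lmul'_apply_tmul, pow_add]
  · simp [conv, hΔb, Algebra.TensorProduct.lmul'_apply_tmul]
  · simp [conv, hΔc, Algebra.TensorProduct.lmul'_apply_tmul]
  · simp only [conv, AlgHom.coe_comp, Function.comp_apply, hΔd, map_add,
      Algebra.TensorProduct.map_tmul, Algebra.TensorProduct.lmul'_apply_tmul,
      chiMN_b, chiMN_c, chiMN_d, mul_zero, zero_mul, add_zero, pow_add]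
    ring

theorem stmt_5 (k : Type) [Field k] [IsAlgClosed k] [CharZero k]
    (ξ : k) (hξ : IsPrimitiveRoot ξ 6)
    (Δ : HAlg k ξ →ₐ[k] (HAlg k ξ ⊗[k] HAlg k ξ))
    (hΔa : Δ (Ha k ξ) = Ha k ξ ⊗ₜ[k] Ha k ξ + Hb k ξ ⊗ₜ[k] Hc k ξ)
    (hΔb : Δ (Hb k ξ) = Ha k ξ ⊗ₜ[k] Hb k ξ + Hb k ξ ⊗ₜ[k] Hd k ξ)
    (hΔc : Δ (Hc k ξ) = Hc k ξ ⊗ₜ[k] Ha k ξ + Hd k ξ ⊗ₜ[k] Hc k ξ)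
    (hΔd : Δ (Hd k ξ) = Hd k ξ ⊗ₜ[k] Hd k ξ + Hc k ξ ⊗ₜ[k] Hb k ξ) :
    -- there are exactly 12 algebra homomorphisms H → k
    Nat.card (HAlg k ξ →ₐ[k] k) = 12 ∧
    -- each of the 12 prescribed assignments on generators extends (uniquely) to one of them
    (∀ m n : ℕ, m < 6 → n < 2 → ∃! φ : HAlg k ξ →ₐ[k] k,
      φ (Ha k ξ) = ξ ^ m ∧ φ (Hd k ξ) = (-1 : k) ^ n * ξ ^ m ∧
      φ (Hb k ξ) = 0 ∧ φ (Hc k ξ) = 0) ∧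
    -- and every algebra homomorphism H → k is of this form
    (∀ φ : HAlg k ξ →ₐ[k] k, ∃ m n : ℕ, m < 6 ∧ n < 2 ∧
      φ (Ha k ξ) = ξ ^ m ∧ φ (Hd k ξ) = (-1 : k) ^ n * ξ ^ m ∧
      φ (Hb k ξ) = 0 ∧ φ (Hc k ξ) = 0) ∧
    -- under the convolution product they form a group isomorphic to Z/6 × Z/2
    (∃ e : Multiplicative (ZMod 6 × ZMod 2) ≃ (HAlg k ξ →ₐ[k] k),
      ∀ u v, e (u * v) = conv k ξ Δ (e u) (e v)) := by
  set F : ZMod 6 × ZMod 2 → (HAlg k ξ →ₐ[k] k) :=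
    fun p => chiMN hξ p.1.val p.2.val with hF
  have hFinj : Function.Injective F := by
    intro p q h
    obtain ⟨h1, h2⟩ := chiMN_inj hξ (ZMod.val_lt p.1) (ZMod.val_lt p.2)
      (ZMod.val_lt q.1) (ZMod.val_lt q.2) h
    exact Prod.ext (ZMod.val_injective 6 h1) (ZMod.val_injective 2 h2)
  have hFsurj : Function.Surjective F := by
    intro φ
    obtain ⟨m, n, hm, hn, rfl⟩ := classify hξ φ
    exact ⟨((m : ZMod 6), (n : ZMod 2)), by
      simp [hF, ZMod.val_cast_of_lt hm, ZMod.val_cast_of_lt hn]⟩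
  set e : Multiplicative (ZMod 6 × ZMod 2) ≃ (HAlg k ξ →ₐ[k] k) :=
    (Multiplicative.toAdd (α := ZMod 6 × ZMod 2)).trans (Equiv.ofBijective F ⟨hFinj, hFsurj⟩)
    with he
  have heval : ∀ u : Multiplicative (ZMod 6 × ZMod 2),
      e u = chiMN hξ u.toAdd.1.val u.toAdd.2.val := fun u => rfl
  refine ⟨?_, ?_, ?_, e, ?_⟩
  · rw [← Nat.card_congr e, Nat.card_congr (Multiplicative.toAdd (α := ZMod 6 × ZMod 2)),
      Nat.card_prod, Nat.card_zmod, Nat.card_zmod]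
  · intro m n hm hn
    refine ⟨chiMN hξ m n, ⟨by simp, by simp, by simp, by simp⟩, ?_⟩
    rintro ψ ⟨h1, h2, h3, h4⟩
    exact hom_ext (by simp [h1]) (by simp [h3]) (by simp [h4]) (by simp [h2])
  · intro φ
    obtain ⟨m, n, hm, hn, rfl⟩ := classify hξ φ
    exact ⟨m, n, hm, hn, by simp, by simp, by simp, by simp⟩
  · intro u v
    rw [heval, heval, heval, toAdd_mul, Prod.fst_add, Prod.snd_add, ZMod.val_add, ZMod.val_add,
      chiMN_mod, conv_chiMN hξ Δ hΔa hΔb hΔc hΔd]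
end
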